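/- arXiv:2009.03647 — 9 statements merged into one kernel-verified Lean document; each statement's English description precedes it below -/
import Mathlib

section
/- Let λ be a Perron number of degree l over ℚ. Then for every positive integer k, the number λᵏ also has degree l over ℚ, and the map μ ↦ μᵏ is a bijection from the set of Galois conjugates of λ onto the set of Galois conjugates of λᵏ. -/
open Polynomial

/-- The Galois conjugates of a real algebraic number: the complex roots of its
minimal polynomial over `ℚ`. -/
def galoisConjugates (x : ℝ) : Set ℂ :=
  {z : ℂ | Polynomial.aeval z (minpoly ℚ x) = 0}

/-- A Perron number: a real algebraic integer `l > 1` all of whose Galois conjugates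
other than `l` itself have modulus strictly less than `l`. -/
def IsPerron (l : ℝ) : Prop :=
  1 < l ∧ IsIntegral ℤ l ∧
    ∀ z : ℂ, z ∈ galoisConjugates l → z ≠ (l : ℂ) → ‖z‖ < l

/-!
If `λ = f(λᵏ)` for some `f ∈ ℚ[X]`, every conjugate `μ` of `λ` satisfies the same relation
`μ = f(μᵏ)`. Hence `μ ↦ μᵏ` maps the conjugates of `λ` injectively to those of `λᵏ`, with inverse
`ν ↦ f(ν)`, and `ℚ(λ) = ℚ(λᵏ)` gives equal degrees. The Perron condition forces `λ ∈ ℚ(λᵏ)`: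
otherwise the minimal polynomial of `λ` over `ℚ(λᵏ)`, a divisor of `Xᵏ - λᵏ`, would have a second
root `μ`, a conjugate of `λ` with `|μ| = λ`.
-/

open IntermediateField

section Conjugates

variable {F L : Type*} [Field F] [Field L] [Algebra F L]

theorem aeval_eq_zero_of_aeval_minpoly_eq_zero {z μ : L} (hμ : aeval μ (minpoly F z) = 0)
    {p : F[X]} (hp : aeval z p = 0) : aeval μ p = 0 :=
  aeval_eq_zero_of_dvd_aeval_eq_zero (minpoly.dvd F z hp) hμ

theorem bijOn_pow_of_aeval_pow_eq {z : L} {f : F[X]} (k : ℕ) (hf : aeval (z ^ k) f = z) :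
    Set.BijOn (fun μ : L => μ ^ k) {μ | aeval μ (minpoly F z) = 0}
      {ν | aeval ν (minpoly F (z ^ k)) = 0} := by
  have hroot : ∀ μ : L, aeval μ (minpoly F z) = 0 → aeval (μ ^ k) f = μ := fun μ hμ => by
    have := aeval_eq_zero_of_aeval_minpoly_eq_zero (p := f.comp (X ^ k) - X) hμ
      (by simp [aeval_comp, hf])
    simpa [aeval_comp, sub_eq_zero] using this
  refine ⟨fun μ hμ => ?_, fun μ₁ hμ₁ μ₂ hμ₂ h => ?_, fun ν hν => ⟨aeval ν f, ?_, ?_⟩⟩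
  · simpa [aeval_comp] using aeval_eq_zero_of_aeval_minpoly_eq_zero
      (p := (minpoly F (z ^ k)).comp (X ^ k)) hμ (by simp [aeval_comp])
  · rw [← hroot μ₁ hμ₁, ← hroot μ₂ hμ₂]
    exact congrArg (aeval · f) h
  · simpa [aeval_comp] using aeval_eq_zero_of_aeval_minpoly_eq_zero
      (p := (minpoly F z).comp f) hν (by simp [aeval_comp, hf])
  · have := aeval_eq_zero_of_aeval_minpoly_eq_zero (p := f ^ k - X) hν (by simp [hf])
    simpa [sub_eq_zero] using this

theorem natDegree_minpoly_pow_of_mem_adjoin {z : L} (hz : IsIntegral F z) {k : ℕ}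
    (h : z ∈ F⟮z ^ k⟯) : (minpoly F (z ^ k)).natDegree = (minpoly F z).natDegree := by
  have hadj : F⟮z ^ k⟯ = F⟮z⟯ := le_antisymm
    (adjoin_simple_le_iff.2 (pow_mem (mem_adjoin_simple_self F z) k))
    (adjoin_simple_le_iff.2 h)
  rw [← adjoin.finrank (hz.pow k), ← adjoin.finrank hz, hadj]

theorem exists_aeval_eq_of_mem_adjoin_simple {x y : L} (hy : IsIntegral F y) (h : x ∈ F⟮y⟯) :
    ∃ f : F[X], aeval y f = x := by
  rw [← mem_toSubalgebra, adjoin_simple_toSubalgebra_of_isAlgebraic hy.isAlgebraic,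
    Algebra.adjoin_singleton_eq_range_aeval] at h
  exact h

theorem mem_range_of_forall_aeval_minpoly_eq_zero [IsAlgClosed L] [PerfectField F] {z : L}
    (hz : IsIntegral F z) (h : ∀ μ : L, aeval μ (minpoly F z) = 0 → μ = z) :
    z ∈ (algebraMap F L).range := by
  classical
  rw [← minpoly.natDegree_eq_one_iff]
  have hcard := card_rootSet_eq_natDegree
    (PerfectField.separable_of_irreducible (minpoly.irreducible hz))
    (IsAlgClosed.splits ((minpoly F z).map (algebraMap F L)))
  have hle : Fintype.card ((minpoly F z).rootSet L) ≤ 1 :=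
    Fintype.card_le_one_iff.2 fun a b => Subtype.ext <| by
      rw [h a (mem_rootSet.1 a.2).2, h b (mem_rootSet.1 b.2).2]
  have := minpoly.natDegree_pos hz
  omega

end Conjugates

theorem mem_adjoin_pow_of_norm_lt {F L : Type*} [Field F] [NormedField L] [IsAlgClosed L]
    [CharZero L] [Algebra F L] {z : L} (hz : IsIntegral F z) {k : ℕ} (hk : k ≠ 0)
    (hdom : ∀ μ : L, aeval μ (minpoly F z) = 0 → μ ≠ z → ‖μ‖ < ‖z‖) : z ∈ F⟮z ^ k⟯ := by
  set K := F⟮z ^ k⟯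
  suffices z ∈ (algebraMap K L).range by
    obtain ⟨x, hx⟩ := this
    exact hx ▸ x.2
  refine mem_range_of_forall_aeval_minpoly_eq_zero hz.tower_top fun μ hμ => ?_
  have hμz : aeval μ (minpoly F z) = 0 := by
    simpa using aeval_eq_zero_of_aeval_minpoly_eq_zero
      (p := (minpoly F z).map (algebraMap F K)) hμ (by simp)
  have hpow : μ ^ k = z ^ k := by
    have := aeval_eq_zero_of_aeval_minpoly_eq_zero (p := X ^ k - C (AdjoinSimple.gen F (z ^ k)))
      hμ (by simp)
    simpa [sub_eq_zero] using this
  by_contra hne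
  have hnorm : ‖μ‖ = ‖z‖ :=
    (pow_left_inj₀ (norm_nonneg μ) (norm_nonneg z) hk).1 (by rw [← norm_pow, hpow, norm_pow])
  exact (hdom μ hμz hne).ne hnorm

theorem minpoly_ofReal (x : ℝ) : minpoly ℚ (x : ℂ) = minpoly ℚ x :=
  minpoly.algebraMap_eq Complex.ofReal_injective x

theorem galoisConjugates_eq_setOf_aeval (x : ℝ) :
    galoisConjugates x = {z : ℂ | aeval z (minpoly ℚ (x : ℂ)) = 0} := by
  rw [minpoly_ofReal]
  rfl

theorem perron_powers (l : ℝ) (hl : IsPerron l) (d : ℕ)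
    (hd : (minpoly ℚ l).natDegree = d) :
    ∀ k : ℕ, 0 < k →
      (minpoly ℚ (l ^ k)).natDegree = d ∧
      Set.BijOn (fun z : ℂ => z ^ k) (galoisConjugates l) (galoisConjugates (l ^ k)) := by
  intro k hk
  obtain ⟨hl1, hlint, hdom⟩ := hl
  have hz : IsIntegral ℚ (l : ℂ) := hlint.tower_top.algebraMap
  have hmem : (l : ℂ) ∈ ℚ⟮(l : ℂ) ^ k⟯ := mem_adjoin_pow_of_norm_lt hz hk.ne' fun μ hμ hne => by
    rw [Complex.norm_real, Real.norm_of_nonneg (by linarith)]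
    exact hdom μ (by rwa [galoisConjugates_eq_setOf_aeval]) hne
  obtain ⟨f, hf⟩ := exists_aeval_eq_of_mem_adjoin_simple (hz.pow k) hmem
  rw [galoisConjugates_eq_setOf_aeval, galoisConjugates_eq_setOf_aeval, Complex.ofReal_pow]
  refine ⟨?_, bijOn_pow_of_aeval_pow_eq k hf⟩
  rw [← minpoly_ofReal, Complex.ofReal_pow, natDegree_minpoly_pow_of_mem_adjoin hz hmem,
    minpoly_ofReal, hd]
end

section
/- Let λ be a Perron number. Then for every positive integer k, the field ℚ(λ) equals the field ℚ(λᵏ). -/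
open Polynomial

theorem minpoly.mem_range_of_rootSet_subsingleton {F E Ω : Type*} [Field F] [Field E] [Field Ω]
    [IsAlgClosed Ω] [Algebra F E] [Algebra F Ω] {x : E} (hx : IsIntegral F x)
    (hsep : (minpoly F x).Separable) (h : ((minpoly F x).rootSet Ω).Subsingleton) :
    x ∈ (algebraMap F E).range := by
  rw [← minpoly.natDegree_eq_one_iff]
  have hcard :=
    card_rootSet_eq_natDegree hsep (IsAlgClosed.splits ((minpoly F x).map (algebraMap F Ω)))
  have hle : Fintype.card ((minpoly F x).rootSet Ω) ≤ 1 :=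
    Fintype.card_le_one_iff_subsingleton.mpr h.coe_sort
  have hpos := minpoly.natDegree_pos hx
  omega

theorem IsPerron.eq_of_pow_eq {l : ℝ} (hl : IsPerron l) {z : ℂ} (hz : z ∈ galoisConjugates l)
    {k : ℕ} (hk : k ≠ 0) (hzk : z ^ k = (l : ℂ) ^ k) : z = l := by
  by_contra hne
  have hl0 : 0 ≤ l := zero_le_one.trans hl.1.le
  have hnorm : ‖z‖ = l := by
    refine (pow_left_inj₀ (norm_nonneg z) hl0 hk).mp ?_
    rw [← norm_pow, hzk, norm_pow, Complex.norm_real, Real.norm_of_nonneg hl0]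
  exact (hl.2.2 z hz hne).ne hnorm

/-- Every conjugate of `l` over `K` is a conjugate over `ℚ` with the same `k`-th power as `l`,
hence equals `l` by the Perron property; being separable, `minpoly K l` then has degree one. -/
theorem IsPerron.mem_of_pow_mem {l : ℝ} (hl : IsPerron l) {K : IntermediateField ℚ ℝ} {k : ℕ}
    (hk : k ≠ 0) (hlk : l ^ k ∈ K) : l ∈ K := by
  have hint : IsIntegral K l := (hl.2.1.tower_top (A := ℚ)).tower_top
  suffices l ∈ (algebraMap K ℝ).range by
    obtain ⟨y, rfl⟩ := this
    exact y.2
  refine minpoly.mem_range_of_rootSet_subsingleton (Ω := ℂ) hint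
    (minpoly.irreducible hint).separable (Set.subsingleton_of_forall_eq (l : ℂ) fun z hz => ?_)
  rw [mem_rootSet_of_ne (minpoly.ne_zero hint)] at hz
  have hconj : z ∈ galoisConjugates l := minpoly.aeval_of_isScalarTower ℚ l z hz
  have hroot : aeval z (X ^ k - C (⟨l ^ k, hlk⟩ : K)) = 0 :=
    aeval_eq_zero_of_dvd_aeval_eq_zero (minpoly.dvd K l (by simp)) hz
  have hzk : z ^ k = (l : ℂ) ^ k := by
    rw [map_sub, map_pow, aeval_X, aeval_C, sub_eq_zero] at hroot
    rw [hroot, IsScalarTower.algebraMap_apply K ℝ ℂ]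
    exact Complex.ofReal_pow l k
  exact hl.eq_of_pow_eq hconj hk hzk

theorem perron_field_powers (l : ℝ) (hl : IsPerron l) :
    ∀ k : ℕ, 0 < k →
      IntermediateField.adjoin ℚ {l} = IntermediateField.adjoin ℚ {l ^ k} := by
  intro k hk
  apply le_antisymm <;> rw [IntermediateField.adjoin_simple_le_iff]
  · exact hl.mem_of_pow_mem hk.ne' (IntermediateField.mem_adjoin_simple_self ℚ (l ^ k))
  · exact pow_mem (IntermediateField.mem_adjoin_simple_self ℚ l) k
end

section
/- Let λ be a Perron number whose degree [ℚ(λ):ℚ] is even. Then for every nonnegative integer k, ℚ(λ + λ⁻¹) = ℚ(λ^{2k+1} + λ^{−(2k+1)}), and for every positive integer k, ℚ(λ² + λ⁻²) = ℚ(λ^{2k} + λ^{−2k}). -/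
open Polynomial

/-!
If a Galois automorphism `σ` fixes `λ ^ n + λ ^ (-n)`, then `σ λ ^ n` is `λ ^ n` or `λ ^ (-n)`.
In the first case `σ λ` is a conjugate of modulus `λ`, hence `σ λ = λ`. In the second case `σ`
swaps `λ` and `u = σ λ`, and `σ⁻¹ ∘ conj ∘ σ` sends `λ` to a conjugate of modulus `λ`, which
forces `conj u = u`; then `λ u` is a real root of unity, so `σ λ = ±λ⁻¹`, the sign `-` being
possible only for even `n`. So `σ` fixes `λ ^ m + λ ^ (-m)` whenever `n` is odd
or `m` is even, and the Galois correspondence in the splitting field of the minimal polynomial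
gives `ℚ(λ ^ m + λ ^ (-m)) ⊆ ℚ(λ ^ n + λ ^ (-n))`.
-/

open IntermediateField ComplexConjugate

theorem eq_or_eq_inv_of_add_inv_eq_add_inv {K : Type*} [Field K] {a b : K} (ha : a ≠ 0)
    (hb : b ≠ 0) (h : a + a⁻¹ = b + b⁻¹) : a = b ∨ a = b⁻¹ := by
  have : (a - b) * (a - b⁻¹) = 0 := by
    linear_combination a * h + mul_inv_cancel₀ hb - mul_inv_cancel₀ ha
  rcases mul_eq_zero.mp this with h | h
  exacts [.inl (sub_eq_zero.mp h), .inr (sub_eq_zero.mp h)]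

theorem IntermediateField.mem_adjoin_simple_map_iff {F E K : Type*} [Field F] [Field E]
    [Field K] [Algebra F E] [Algebra F K] (φ : E →ₐ[F] K) {a b : E} :
    φ a ∈ F⟮φ b⟯ ↔ a ∈ F⟮b⟯ := by
  rw [← Set.image_singleton, ← adjoin_map, mem_map]
  exact ⟨fun ⟨c, hc, hca⟩ ↦ φ.injective hca ▸ hc, fun h ↦ ⟨a, h, rfl⟩⟩

theorem IsGalois.mem_adjoin_simple_of_forall_fixes {F E : Type*} [Field F] [Field E]
    [Algebra F E] [IsGalois F E] [FiniteDimensional F E] {a b : E}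
    (h : ∀ σ : E ≃ₐ[F] E, σ b = b → σ a = a) : a ∈ F⟮b⟯ := by
  rw [← IsGalois.fixedField_fixingSubgroup F⟮b⟯]
  exact fun σ ↦ h σ.1 (σ.2 ⟨b, mem_adjoin_simple_self F b⟩)

section UniqueRootOfNorm

variable {N : Type*} [Field N] [Algebra ℚ N]

def IsUniqueRootOfNorm (f : N →+* ℂ) (p : ℚ[X]) (x : N) : Prop :=
  ∀ y, aeval y p = 0 → ‖f y‖ = ‖f x‖ → y = x

theorem aeval_algEquiv_apply_eq_zero {p : ℚ[X]} {y : N} (σ : N ≃ₐ[ℚ] N) (hy : aeval y p = 0) :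
    aeval (σ y) p = 0 := by
  simp [aeval_algEquiv, hy]

namespace IsUniqueRootOfNorm

variable {f : N →+* ℂ} {p : ℚ[X]} {x : N} {n : ℕ}

theorem eq_of_pow_eq (hx : IsUniqueRootOfNorm f p x) {y : N} (hy : aeval y p = 0) (hn : n ≠ 0)
    (h : y ^ n = x ^ n) : y = x :=
  hx y hy <| (pow_left_inj₀ (norm_nonneg _) (norm_nonneg _) hn).mp <| by
    rw [← norm_pow, ← norm_pow, ← map_pow, ← map_pow, h]

variable (hx : IsUniqueRootOfNorm f p x) (hxp : aeval x p = 0) (σ : N ≃ₐ[ℚ] N) (hn : n ≠ 0)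
include hx hxp hn

section PowEqInvPow

variable (hσ : σ x ^ n = (x ^ n)⁻¹)
include hσ

theorem apply_apply_eq_self : σ (σ x) = x :=
  hx.eq_of_pow_eq (aeval_algEquiv_apply_eq_zero σ (aeval_algEquiv_apply_eq_zero σ hxp)) hn <| by
    rw [← map_pow, hσ, map_inv₀, map_pow, hσ, inv_inv]

/-- `σ⁻¹ (c (σ x))` is a root of `p` whose `n`-th power is `x ^ n`, hence it is `x`. -/
theorem conj_apply_eq_self (c : N ≃ₐ[ℚ] N) (hcx : c x = x) : c (σ x) = σ x := by
  have hσsymm : σ.symm x = σ x := σ.symm_apply_eq.mpr (hx.apply_apply_eq_self hxp σ hn hσ).symm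
  have hw : σ.symm (c (σ x)) = x := by
    refine hx.eq_of_pow_eq (aeval_algEquiv_apply_eq_zero _ (aeval_algEquiv_apply_eq_zero _
      (aeval_algEquiv_apply_eq_zero _ hxp))) hn ?_
    rw [← map_pow, ← map_pow, hσ, map_inv₀, map_pow, hcx, map_inv₀, map_pow, hσsymm, hσ, inv_inv]
  exact σ.symm_apply_eq.mp hw

theorem apply_eq_inv_or_neg_inv (hx0 : x ≠ 0) (c : N ≃ₐ[ℚ] N)
    (hc : ∀ y, f (c y) = conj (f y)) (hcx : c x = x) :
    σ x = x⁻¹ ∨ (Even n ∧ σ x = -x⁻¹) := by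
  -- `z` is a root of unity fixed by `c`, so `z = z⁻¹`.
  set z := x * σ x with hz
  have hzn : z ^ n = 1 := by rw [hz, mul_pow, hσ, mul_inv_cancel₀ (pow_ne_zero n hx0)]
  have hcz : c z = z⁻¹ := f.injective <| by
    rw [hc, map_inv₀, Complex.inv_eq_conj
      (Complex.norm_eq_one_of_pow_eq_one (by rw [← map_pow, hzn, map_one]) hn)]
  have hcz' : c z = z := by rw [hz, map_mul, hcx, hx.conj_apply_eq_self hxp σ hn hσ c hcx]
  have hz2 : (z - 1) * (z + 1) = 0 := by
    have hz0 : z ≠ 0 := by rintro h; simp [h, hn] at hzn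
    linear_combination (-z) * (hcz.symm.trans hcz') + mul_inv_cancel₀ hz0
  have hσx : σ x = x⁻¹ * z := by rw [hz, inv_mul_cancel_left₀ hx0]
  rcases mul_eq_zero.mp hz2 with h | h
  · left
    rw [hσx, sub_eq_zero.mp h, mul_one]
  · right
    have hz : z = -1 := eq_neg_of_add_eq_zero_left h
    have hne : (-1 : N) ≠ 1 := fun h ↦ by have h' := congrArg f h; norm_num at h'
    refine ⟨(neg_one_pow_eq_one_iff_even hne).mp (hz ▸ hzn), ?_⟩
    rw [hσx, hz, mul_neg_one]

end PowEqInvPow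

variable (hx0 : x ≠ 0) (c : N ≃ₐ[ℚ] N) (hc : ∀ y, f (c y) = conj (f y)) (hcx : c x = x)
include hx0 hc hcx

theorem apply_eq_of_apply_pow_add_inv_pow_eq
    (h : σ (x ^ n + (x ^ n)⁻¹) = x ^ n + (x ^ n)⁻¹) :
    σ x = x ∨ σ x = x⁻¹ ∨ (Even n ∧ σ x = -x⁻¹) := by
  rw [map_add, map_inv₀, map_pow] at h
  rcases eq_or_eq_inv_of_add_inv_eq_add_inv (pow_ne_zero n (by simpa using hx0))
    (pow_ne_zero n hx0) h with h | h
  · exact .inl (hx.eq_of_pow_eq (aeval_algEquiv_apply_eq_zero σ hxp) hn h)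
  · exact .inr (hx.apply_eq_inv_or_neg_inv hxp σ hn h hx0 c hc hcx)

theorem apply_pow_add_inv_pow_eq {m : ℕ} (hpar : Odd n ∨ Even m)
    (h : σ (x ^ n + (x ^ n)⁻¹) = x ^ n + (x ^ n)⁻¹) :
    σ (x ^ m + (x ^ m)⁻¹) = x ^ m + (x ^ m)⁻¹ := by
  rw [map_add, map_inv₀, map_pow]
  rcases hx.apply_eq_of_apply_pow_add_inv_pow_eq hxp σ hn hx0 c hc hcx h with h | h | ⟨hev, h⟩
  · rw [h]
  · rw [h, inv_pow, inv_inv, add_comm]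
  · have hm : Even m := hpar.resolve_left (Nat.not_odd_iff_even.mpr hev)
    rw [h, hm.neg_pow, inv_pow, inv_inv, add_comm]

theorem pow_add_inv_pow_mem_adjoin [IsGalois ℚ N] [FiniteDimensional ℚ N] {m : ℕ}
    (hpar : Odd n ∨ Even m) : x ^ m + (x ^ m)⁻¹ ∈ ℚ⟮x ^ n + (x ^ n)⁻¹⟯ :=
  IsGalois.mem_adjoin_simple_of_forall_fixes fun σ ↦
    hx.apply_pow_add_inv_pow_eq hxp σ hn hx0 c hc hcx hpar

end IsUniqueRootOfNorm

end UniqueRootOfNorm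

theorem IsPerron.isUniqueRootOfNorm {l : ℝ} (hl : IsPerron l) {N : Type*} [Field N] [Algebra ℚ N]
    (f : N →+* ℂ) {x : N} (hx : f x = l) : IsUniqueRootOfNorm f (minpoly ℚ l) x := by
  intro y hy hnorm
  refine f.injective (hx ▸ not_not.mp fun hne ↦ ?_)
  have hconj : f y ∈ galoisConjugates l := by
    simpa [galoisConjugates, hy] using aeval_algHom_apply f.toRatAlgHom y (minpoly ℚ l)
  have hlt := hl.2.2 (f y) hconj hne
  have hfy : ‖f y‖ = l := by simpa [hx, abs_of_pos (zero_lt_one.trans hl.1)] using hnorm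
  exact hlt.ne hfy

theorem IsPerron.pow_add_inv_pow_mem_adjoin {l : ℝ} (hl : IsPerron l) {m n : ℕ} (hn : n ≠ 0)
    (hpar : Odd n ∨ Even m) : l ^ m + (l ^ m)⁻¹ ∈ ℚ⟮l ^ n + (l ^ n)⁻¹⟯ := by
  set p := minpoly ℚ l
  have hli : IsIntegral ℚ l := hl.2.1.tower_top
  have hroot : aeval (l : ℂ) p = 0 := by
    rw [← Complex.coe_algebraMap, aeval_algebraMap_apply, minpoly.aeval, map_zero]
  let N := adjoin ℚ (p.rootSet ℂ)
  have : IsSplittingField ℚ N p := adjoin_rootSet_isSplittingField (IsAlgClosed.splits _)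
  have := IsSplittingField.finiteDimensional N p
  have : IsGalois ℚ N :=
    IsGalois.of_separable_splitting_field (minpoly.irreducible hli).separable
  let x : N := ⟨l, subset_adjoin _ _ (mem_rootSet.mpr ⟨minpoly.ne_zero hli, hroot⟩)⟩
  let c : N ≃ₐ[ℚ] N := (Complex.conjAe.restrictScalars ℚ).restrictNormal N
  have hc (y : N) : algebraMap N ℂ (c y) = conj (algebraMap N ℂ y) :=
    AlgEquiv.restrictNormal_commutes _ N y
  have hcx : c x = x := (algebraMap N ℂ).injective (by rw [hc]; exact Complex.conj_ofReal l)
  have hxp : aeval x p = 0 :=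
    (algebraMap N ℂ).injective (by rw [← aeval_algebraMap_apply, map_zero]; exact hroot)
  have hx0 : x ≠ 0 := fun h ↦
    (zero_lt_one.trans hl.1).ne' (by simpa [x] using congrArg Subtype.val h)
  have hx := hl.isUniqueRootOfNorm (algebraMap N ℂ) (x := x) rfl
  have hmem : x ^ m + (x ^ m)⁻¹ ∈ ℚ⟮x ^ n + (x ^ n)⁻¹⟯ :=
    hx.pow_add_inv_pow_mem_adjoin hxp hn hx0 c hc hcx hpar
  rw [← mem_adjoin_simple_map_iff (algebraMap N ℂ).toRatAlgHom] at hmem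
  rw [← mem_adjoin_simple_map_iff (algebraMap ℝ ℂ).toRatAlgHom]
  simpa using hmem

theorem perron_traces_even_degree_general (l : ℝ) (hl : IsPerron l) :
    (∀ k : ℕ,
      IntermediateField.adjoin ℚ {l + l⁻¹} =
        IntermediateField.adjoin ℚ {l ^ (2 * k + 1) + (l ^ (2 * k + 1))⁻¹}) ∧
    (∀ k : ℕ, 0 < k →
      IntermediateField.adjoin ℚ {l ^ 2 + (l ^ 2)⁻¹} =
        IntermediateField.adjoin ℚ {l ^ (2 * k) + (l ^ (2 * k))⁻¹}) := by
  have hmem {m n : ℕ} (hn : n ≠ 0) (hpar : Odd n ∨ Even m) :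
      ℚ⟮l ^ m + (l ^ m)⁻¹⟯ ≤ ℚ⟮l ^ n + (l ^ n)⁻¹⟯ :=
    adjoin_simple_le_iff.mpr (hl.pow_add_inv_pow_mem_adjoin hn hpar)
  refine ⟨fun k ↦ ?_, fun k hk ↦ ?_⟩
  · simpa using le_antisymm (hmem (m := 1) (by omega) (.inl (odd_two_mul_add_one k)))
      (hmem one_ne_zero (.inl odd_one))
  · exact le_antisymm (hmem (by omega) (.inr even_two)) (hmem two_ne_zero (.inr (even_two_mul k)))

theorem perron_traces_even_degree (l : ℝ) (hl : IsPerron l)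
    (heven : Even (minpoly ℚ l).natDegree) :
    (∀ k : ℕ,
      IntermediateField.adjoin ℚ {l + l⁻¹} =
        IntermediateField.adjoin ℚ {l ^ (2 * k + 1) + (l ^ (2 * k + 1))⁻¹}) ∧
    (∀ k : ℕ, 0 < k →
      IntermediateField.adjoin ℚ {l ^ 2 + (l ^ 2)⁻¹} =
        IntermediateField.adjoin ℚ {l ^ (2 * k) + (l ^ (2 * k))⁻¹}) :=
  perron_traces_even_degree_general l hl
end

section
/- Let λ be a Perron number whose degree [ℚ(λ):ℚ] is even. Then ℚ(λ + λ⁻¹) = ℚ(λ² + λ⁻²) if and only if −λ⁻¹ is not a Galois conjugate of λ. -/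
/-!
Write `α = λ + λ⁻¹` and `β = λ² + λ⁻² = α² - 2`, so that `ℚ(β) ⊆ ℚ(α)`, with equality iff
`α ∈ ℚ(β)`. If `-λ⁻¹` is a conjugate of `λ`, the embedding `λ ↦ -λ⁻¹` of `ℚ(λ)` fixes `β` but
negates `α`, so `α ∉ ℚ(β)`. Conversely, if `α ∉ ℚ(β)` then `X² - α²` is the minimal polynomial of
`α` over `ℚ(β)`, so `-α` is a conjugate of `α`, hence `-α = μ + μ⁻¹` for some conjugate `μ` of
`λ`. This forces `μ = -λ` or `μ = -λ⁻¹`, and the Perron condition rules out `μ = -λ`.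
-/

open Polynomial

open IntermediateField

theorem add_inv_eq_add_inv_iff {K : Type*} [Field K] {a b : K} (ha : a ≠ 0) (hb : b ≠ 0) :
    a + a⁻¹ = b + b⁻¹ ↔ a = b ∨ a = b⁻¹ := by
  have key : a + a⁻¹ - (b + b⁻¹) = (a - b) * (a - b⁻¹) / a := by field_simp; ring
  rw [← sub_eq_zero, key, div_eq_zero_iff, mul_eq_zero, sub_eq_zero, sub_eq_zero]
  simp [ha]

section

variable {F E : Type*} [Field F] [Field E] [Algebra F E]

theorem sq_add_inv_sq_eq {x : E} (hx : x ≠ 0) : x ^ 2 + (x ^ 2)⁻¹ = (x + x⁻¹) ^ 2 - 2 := by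
  field_simp; ring

theorem adjoin_add_inv_eq_adjoin_sq_add_inv_sq_iff {x : E} (hx : x ≠ 0) :
    F⟮x + x⁻¹⟯ = F⟮x ^ 2 + (x ^ 2)⁻¹⟯ ↔ x + x⁻¹ ∈ F⟮x ^ 2 + (x ^ 2)⁻¹⟯ := by
  have hle : F⟮x ^ 2 + (x ^ 2)⁻¹⟯ ≤ F⟮x + x⁻¹⟯ := by
    rw [adjoin_simple_le_iff, sq_add_inv_sq_eq hx]
    exact sub_mem (pow_mem (mem_adjoin_simple_self F _) 2) (ofNat_mem _ 2)
  rw [← adjoin_simple_le_iff, le_antisymm_iff, and_iff_left hle]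

theorem add_inv_notMem_adjoin_sq_add_inv_sq [NeZero (2 : E)] {x : E} (hx : IsIntegral F x)
    (hα : x + x⁻¹ ≠ 0) (hconj : aeval (-x⁻¹) (minpoly F x) = 0) :
    x + x⁻¹ ∉ F⟮x ^ 2 + (x ^ 2)⁻¹⟯ := by
  intro hmem
  set g := AdjoinSimple.gen F x
  set φ := (algHomAdjoinIntegralEquiv F hx).symm ⟨-x⁻¹, mem_aroots.2 ⟨minpoly.ne_zero hx, hconj⟩⟩
  have hφ : φ g = -x⁻¹ := algHomAdjoinIntegralEquiv_symm_apply_gen F hx _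
  have hsq : x ^ 2 ∈ F⟮x⟯ := pow_mem (mem_adjoin_simple_self F x) 2
  have hle : F⟮x ^ 2 + (x ^ 2)⁻¹⟯ ≤ F⟮x⟯ := adjoin_simple_le_iff.2 (add_mem hsq (inv_mem hsq))
  -- `φ` fixes the generator of `F⟮x ^ 2 + (x ^ 2)⁻¹⟯`, hence all of it, but negates `x + x⁻¹`
  have hfix : φ.comp (inclusion hle) = val _ := by
    refine adjoin_algHom_ext F fun y hy ↦ ?_
    rw [Set.mem_singleton_iff] at hy
    subst hy
    have : inclusion hle ⟨_, mem_adjoin_simple_self F _⟩ = g ^ 2 + (g ^ 2)⁻¹ := rfl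
    simp only [AlgHom.comp_apply, this, map_add, map_inv₀, map_pow, hφ, val_mk]
    simp [add_comm]
  have hneg : φ (inclusion hle ⟨_, hmem⟩) = -(x + x⁻¹) := by
    have : inclusion hle ⟨_, hmem⟩ = g + g⁻¹ := rfl
    rw [this, map_add, map_inv₀, hφ, inv_neg, inv_inv, neg_add, add_comm]
  rw [← AlgHom.comp_apply, hfix, val_mk, eq_comm, neg_eq_iff_add_eq_zero, ← two_mul] at hneg
  exact hα ((mul_eq_zero.1 hneg).resolve_left two_ne_zero)

theorem aeval_neg_minpoly_of_sq_mem_of_notMem {K : IntermediateField F E} {y : E}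
    (hsq : y ^ 2 ∈ K) (hy : y ∉ K) : aeval (-y) (minpoly F y) = 0 := by
  set q : K[X] := X ^ 2 - C ⟨y ^ 2, hsq⟩
  have hq : q.Monic := monic_X_pow_sub_C _ two_ne_zero
  have hqy : aeval y q = 0 := by simp [q]
  have hint : IsIntegral K y := ⟨q, hq, hqy⟩
  have hmin : minpoly K y = q := by
    refine (eq_of_monic_of_dvd_of_natDegree_le (minpoly.monic hint) hq
      (minpoly.dvd K y hqy) ?_).symm
    rw [natDegree_X_pow_sub_C, minpoly.two_le_natDegree_iff hint]
    rintro ⟨z, rfl⟩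
    exact hy z.2
  exact minpoly.aeval_of_isScalarTower F y (-y) (by rw [hmin]; simp [q])

theorem aeval_neg_or_aeval_neg_inv_of_aeval_neg_add_inv {x : E} (hx : IsIntegral F x)
    (hα : x + x⁻¹ ≠ 0) (h : aeval (-(x + x⁻¹)) (minpoly F (x + x⁻¹)) = 0) :
    aeval (-x) (minpoly F x) = 0 ∨ aeval (-x⁻¹) (minpoly F x) = 0 := by
  let L := AlgebraicClosure E
  have : Algebra.IsAlgebraic F F⟮x⟯ := isAlgebraic_adjoin_simple hx
  set g := AdjoinSimple.gen F x
  have hmem : x + x⁻¹ ∈ F⟮x⟯ :=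
    add_mem (mem_adjoin_simple_self F x) (inv_mem (mem_adjoin_simple_self F x))
  have hroot : aeval (algebraMap E L (-(x + x⁻¹))) (minpoly F (⟨_, hmem⟩ : F⟮x⟯)) = 0 := by
    rw [minpoly_eq, aeval_algebraMap_apply, h, map_zero]
  obtain ⟨φ, hφ⟩ := exists_algHom_of_splits_of_aeval
    (fun s ↦ ⟨(Algebra.IsAlgebraic.isAlgebraic s).isIntegral, IsAlgClosed.splits _⟩) hroot
  set μ := φ g
  have hμ : aeval μ (minpoly F x) = 0 := by
    rw [← minpoly_gen, aeval_algHom_apply, minpoly.aeval, map_zero]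
  have hx0 : x ≠ 0 := by rintro rfl; simp at hα
  have hμsum : μ + μ⁻¹ = algebraMap E L (-(x + x⁻¹)) := by
    rw [← hφ, ← map_inv₀, ← map_add]; rfl
  have hμ0 : μ ≠ 0 := by
    rintro hμ0
    rw [hμ0, inv_zero, add_zero, eq_comm, map_eq_zero, neg_eq_zero] at hμsum
    exact hα hμsum
  rw [map_neg, map_add, map_inv₀, neg_add, ← inv_neg] at hμsum
  have hx0' : -algebraMap E L x ≠ 0 := by simpa using hx0
  rcases (add_inv_eq_add_inv_iff hμ0 hx0').1 hμsum with h | h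
  · left
    rwa [h, ← map_neg, aeval_algebraMap_eq_zero_iff] at hμ
  · right
    rwa [h, ← map_neg, ← map_inv₀, aeval_algebraMap_eq_zero_iff, inv_neg] at hμ

end

theorem ofReal_mem_galoisConjugates_iff {x y : ℝ} :
    (y : ℂ) ∈ galoisConjugates x ↔ aeval y (minpoly ℚ x) = 0 := by
  rw [galoisConjugates, Set.mem_ofPred_eq, ← Complex.coe_algebraMap, aeval_algebraMap_apply,
    map_eq_zero_iff _ (algebraMap ℝ ℂ).injective]

theorem IsPerron.aeval_neg_minpoly_ne_zero {l : ℝ} (hl : IsPerron l) :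
    aeval (-l) (minpoly ℚ l) ≠ 0 := by
  intro h
  have hl0 : 0 < l := one_pos.trans hl.1
  have hlt := hl.2.2 _ (ofReal_mem_galoisConjugates_iff.2 h) (by norm_cast; linarith)
  rw [Complex.norm_real, norm_neg, Real.norm_of_nonneg hl0.le] at hlt
  exact hlt.false

theorem perron_traces_even_degree_iff_general (l : ℝ) (hl : IsPerron l) :
    IntermediateField.adjoin ℚ {l + l⁻¹} =
      IntermediateField.adjoin ℚ {l ^ 2 + (l ^ 2)⁻¹} ↔
    (-((l : ℂ))⁻¹) ∉ galoisConjugates l := by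
  have hl0 : 0 < l := one_pos.trans hl.1
  have hint : IsIntegral ℚ l := hl.2.1.tower_top
  have hα : l + l⁻¹ ≠ 0 := by positivity
  rw [adjoin_add_inv_eq_adjoin_sq_add_inv_sq_iff hl0.ne', show -(l : ℂ)⁻¹ = ((-l⁻¹ : ℝ) : ℂ) by
    push_cast; rfl, ofReal_mem_galoisConjugates_iff]
  refine ⟨fun hmem hconj ↦ add_inv_notMem_adjoin_sq_add_inv_sq hint hα hconj hmem, fun hnot ↦ ?_⟩
  by_contra hnotMem
  have hsq : (l + l⁻¹) ^ 2 ∈ ℚ⟮l ^ 2 + (l ^ 2)⁻¹⟯ := by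
    rw [← sub_add_cancel ((l + l⁻¹) ^ 2) 2, ← sq_add_inv_sq_eq hl0.ne']
    exact add_mem (mem_adjoin_simple_self ℚ _) (ofNat_mem _ 2)
  exact (aeval_neg_or_aeval_neg_inv_of_aeval_neg_add_inv hint hα
    (aeval_neg_minpoly_of_sq_mem_of_notMem hsq hnotMem)).elim hl.aeval_neg_minpoly_ne_zero hnot

theorem perron_traces_even_degree_iff (l : ℝ) (hl : IsPerron l)
    (heven : Even (minpoly ℚ l).natDegree) :
    IntermediateField.adjoin ℚ {l + l⁻¹} =
      IntermediateField.adjoin ℚ {l ^ 2 + (l ^ 2)⁻¹} ↔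
    (-((l : ℂ))⁻¹) ∉ galoisConjugates l :=
  perron_traces_even_degree_iff_general l hl
end

section
/- Let λ be a real algebraic number with λ > 1 such that −λ⁻¹ is a Galois conjugate of λ. Then for every Galois conjugate μ of λ, the number −μ⁻¹ is also a Galois conjugate of λ, and the degree [ℚ(λ):ℚ] is even. -/
/-!
The `ℚ`-embeddings of `ℚ(λ)` carry `λ` onto each conjugate `μ` and commute with `z ↦ -z⁻¹`;
since `-λ⁻¹` is a root of the minimal polynomial of `λ`, so is `-μ⁻¹`. Thus `z ↦ -z⁻¹` is an
involution of the (distinct) complex roots. A fixed point satisfies `z³ + z = 0`, and since all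
conjugates satisfy the same polynomial relations this would give `λ³ + λ = 0`, impossible for
`λ > 1`. So the roots pair off and their number, the degree, is even.
-/

open Polynomial

open Finset in
theorem Finset.even_card_of_involution {α : Type*} {s : Finset α} (g : α → α)
    (g_mem : ∀ a ∈ s, g a ∈ s) (hg : ∀ a ∈ s, g (g a) = a) (hfix : ∀ a ∈ s, g a ≠ a) :
    Even #s := by
  have h := sum_involution (f := fun _ ↦ (1 : ZMod 2)) (fun a _ ↦ g a) (fun _ _ ↦ rfl)
    (fun a ha _ ↦ hfix a ha) g_mem hg
  rwa [sum_const, nsmul_one, ZMod.natCast_eq_zero_iff_even] at h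

-- `0` is a fixed point of `z ↦ -z⁻¹` since `0⁻¹ = 0`; hence the factor `z`.
theorem pow_three_add_self_eq_zero_of_neg_inv_eq {F : Type*} [Field F] {z : F}
    (h : -z⁻¹ = z) : z ^ 3 + z = 0 := by
  rcases eq_or_ne z 0 with rfl | hz
  · simp
  · have : z * z = -1 := by nth_rw 2 [← h]; rw [mul_neg, mul_inv_cancel₀ hz]
    linear_combination z * this

section

variable {K L M : Type*} [Field K] [Field L] [Field M] [Algebra K L] [Algebra K M]

theorem aeval_eq_zero_of_aeval_minpoly_eq_zero_s6 {x : L} {z : M} (hx : IsIntegral K x)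
    (hz : aeval z (minpoly K x) = 0) {q : K[X]} (hq : aeval z q = 0) : aeval x q = 0 := by
  rw [← minpoly.dvd_iff,
    minpoly.eq_of_irreducible_of_monic (minpoly.irreducible hx) hz (minpoly.monic hx)]
  exact minpoly.dvd K z hq

open IntermediateField in
theorem aeval_neg_inv_minpoly_eq_zero {x : L} {z : M} (hx : IsIntegral K x)
    (hx' : aeval (-x⁻¹) (minpoly K x) = 0) (hz : aeval z (minpoly K x) = 0) :
    aeval (-z⁻¹) (minpoly K x) = 0 := by
  set φ : K⟮x⟯ →ₐ[K] M :=
    (adjoin.powerBasis hx).lift z (by rwa [adjoin.powerBasis_gen, minpoly_gen])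
  have hφ : φ (AdjoinSimple.gen K x) = z := (adjoin.powerBasis hx).lift_gen _ _
  have hgen : aeval (-(AdjoinSimple.gen K x)⁻¹) (minpoly K x) = 0 := by
    apply (algebraMap K⟮x⟯ L).injective
    rw [map_zero, ← aeval_algebraMap_apply]
    simpa using hx'
  rw [← hφ, ← map_inv₀, ← map_neg, aeval_algHom_apply, hgen, map_zero]

end

theorem neg_inv_conjugate_forces_even_degree (l : ℝ) (halg : IsAlgebraic ℚ l)
    (hl : 1 < l) (hconj : (-((l : ℂ))⁻¹) ∈ galoisConjugates l) :
    (∀ μ ∈ galoisConjugates l, (-μ⁻¹) ∈ galoisConjugates l) ∧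
    Even (minpoly ℚ l).natDegree := by
  have hint : IsIntegral ℚ l := halg.isIntegral
  have hminpoly : minpoly ℚ (l : ℂ) = minpoly ℚ l :=
    minpoly.algebraMap_eq (algebraMap ℝ ℂ).injective l
  have hclosed : ∀ μ ∈ galoisConjugates l, (-μ⁻¹) ∈ galoisConjugates l := by
    intro μ hμ
    rw [galoisConjugates, ← hminpoly] at hconj hμ ⊢
    exact aeval_neg_inv_minpoly_eq_zero hint.algebraMap hconj hμ
  refine ⟨hclosed, ?_⟩
  have hroots : ∀ z, z ∈ (minpoly ℚ l).rootSet ℂ ↔ z ∈ galoisConjugates l :=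
    fun z ↦ mem_rootSet_of_ne (minpoly.ne_zero hint)
  rw [← card_rootSet_eq_natDegree (K := ℂ) (minpoly.irreducible hint).separable
    (IsAlgClosed.splits _), ← Set.toFinset_card]
  refine Finset.even_card_of_involution (fun z ↦ -z⁻¹) (by simpa [hroots] using hclosed)
    (fun z _ ↦ by simp) fun z hz hfix ↦ ?_
  have hzconj : z ∈ galoisConjugates l := by simpa [hroots] using hz
  have hcube : aeval l (X ^ 3 + X : ℚ[X]) = 0 := aeval_eq_zero_of_aeval_minpoly_eq_zero_s6 hint
    hzconj (by simpa using pow_three_add_self_eq_zero_of_neg_inv_eq hfix)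
  simp only [map_add, map_pow, aeval_X] at hcube
  linarith [pow_pos (zero_lt_one.trans hl) 3]
end

section
/- Let K be a field, let Q be an n×n matrix over K, and let M be the 2n×2n block matrix M = [[Q, −I],[I, 0]]. Then det(M) = 1, and for every nonzero t ∈ K one has det(t·I_{2n} − M) = tⁿ · det((t + t⁻¹)·I_n − Q). -/
open Matrix Polynomial

/-- Determinant of the block matrix when the top-left block is invertible. -/
lemma aux_det_one {R : Type*} [CommRing R] {n : ℕ} (A : Matrix (Fin n) (Fin n) R)
    [Invertible A] :
    (Matrix.fromBlocks A (-1) (1 : Matrix (Fin n) (Fin n) R) 0).det = 1 := by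
  rw [Matrix.det_fromBlocks₁₁]
  have h : (0 - (1 : Matrix (Fin n) (Fin n) R) * ⅟A * (-1)) = ⅟A := by
    simp [Matrix.mul_neg]
  rw [h, ← Matrix.det_mul, mul_invOf_self, Matrix.det_one]

lemma aux_det_part1 {K : Type*} [Field K] {n : ℕ} (Q : Matrix (Fin n) (Fin n) K) :
    (Matrix.fromBlocks Q (-1) (1 : Matrix (Fin n) (Fin n) K) 0).det = 1 := by
  set F := FractionRing (Polynomial K)
  let φ : Polynomial K →+* F := algebraMap _ _
  have hφ : Function.Injective φ := IsFractionRing.injective _ _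
  set A : Matrix (Fin n) (Fin n) (Polynomial K) := Matrix.charmatrix (-Q) with hA
  have hdetA : A.det ≠ 0 := by
    rw [hA, ← Matrix.charpoly]
    exact (Matrix.charpoly_monic _).ne_zero
  have hinv : Invertible ((A.map φ)) := by
    apply Matrix.invertibleOfIsUnitDet
    rw [show A.map ⇑φ = φ.mapMatrix A from rfl, ← RingHom.map_det]
    exact (isUnit_iff_ne_zero).2 (fun h => hdetA (hφ (by simpa using h)))
  have key : (Matrix.fromBlocks A (-1) (1 : Matrix (Fin n) (Fin n) (Polynomial K)) 0).det = 1 := by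
    apply hφ
    rw [RingHom.map_det, RingHom.mapMatrix_apply, Matrix.fromBlocks_map, _root_.map_one]
    have h1 : ((-1 : Matrix (Fin n) (Fin n) (Polynomial K)).map φ) = -1 := by
      ext i j; simp [Matrix.one_apply, apply_ite]
    have h2 : ((1 : Matrix (Fin n) (Fin n) (Polynomial K)).map φ) = 1 := by
      ext i j; simp [Matrix.one_apply, apply_ite]
    have h3 : ((0 : Matrix (Fin n) (Fin n) (Polynomial K)).map φ) = 0 := by
      ext i j; simp
    rw [h1, h2, h3]
    exact aux_det_one (A.map φ)
  have := congrArg (Polynomial.evalRingHom (0 : K)) key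
  rw [RingHom.map_det, RingHom.mapMatrix_apply, Matrix.fromBlocks_map, _root_.map_one] at this
  have e1 : ((-1 : Matrix (Fin n) (Fin n) (Polynomial K)).map (evalRingHom 0)) = -1 := by
    ext i j; simp [Matrix.one_apply, apply_ite]
  have e2 : ((1 : Matrix (Fin n) (Fin n) (Polynomial K)).map (evalRingHom 0)) = 1 := by
    ext i j; simp [Matrix.one_apply, apply_ite]
  have e3 : ((0 : Matrix (Fin n) (Fin n) (Polynomial K)).map (evalRingHom 0)) = 0 := by
    ext i j; simp
  have e4 : A.map (evalRingHom 0) = Q := by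
    ext i j
    rw [hA]
    by_cases h : i = j
    · subst h; simp [Matrix.map_apply, Matrix.charmatrix_apply_eq]
    · simp [Matrix.map_apply, Matrix.charmatrix_apply_ne _ _ _ h]
  rw [e1, e2, e3, e4] at this
  simpa using this

theorem blockMatrix_det_and_charpoly {K : Type*} [Field K] {n : ℕ}
    (Q : Matrix (Fin n) (Fin n) K) :
    (Matrix.fromBlocks Q (-1) (1 : Matrix (Fin n) (Fin n) K) 0).det = 1 ∧
    ∀ t : K, t ≠ 0 →
      (t • (1 : Matrix (Fin n ⊕ Fin n) (Fin n ⊕ Fin n) K) -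
          Matrix.fromBlocks Q (-1) (1 : Matrix (Fin n) (Fin n) K) 0).det =
        t ^ n * ((t + t⁻¹) • (1 : Matrix (Fin n) (Fin n) K) - Q).det := by
  refine ⟨aux_det_part1 Q, fun t ht => ?_⟩
  have hblock : t • (1 : Matrix (Fin n ⊕ Fin n) (Fin n ⊕ Fin n) K) -
      Matrix.fromBlocks Q (-1) (1 : Matrix (Fin n) (Fin n) K) 0 =
      Matrix.fromBlocks (t • 1 - Q) 1 (-1) (t • 1) := by
    rw [← Matrix.fromBlocks_one, Matrix.fromBlocks_smul, sub_eq_add_neg,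
      Matrix.fromBlocks_neg, Matrix.fromBlocks_add]
    congr 1 <;> simp [sub_eq_add_neg]
  rw [hblock]
  have hmul : (t • (1 : Matrix (Fin n) (Fin n) K)) * (t⁻¹ • 1) = 1 := by
    rw [Matrix.smul_mul, Matrix.mul_smul, smul_smul, mul_inv_cancel₀ ht, one_mul, one_smul]
  haveI : Invertible (t • (1 : Matrix (Fin n) (Fin n) K)) := invertibleOfRightInverse _ _ hmul
  rw [Matrix.det_fromBlocks₂₂]
  congr 1
  · simp [Matrix.det_smul]
  · congr 1
    rw [invOf_eq_right_inv hmul]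
    rw [Matrix.one_mul, Matrix.mul_neg, Matrix.mul_one, sub_neg_eq_add, add_smul]
    abel
end

section
/- Let R be a commutative ring, let Q be an n×n matrix over R, and let M be the 2n×2n block matrix M = [[Q, −I],[I, 0]]. Then M is invertible with inverse M⁻¹ = [[0, I],[−I, Q]], M + M⁻¹ is the block diagonal matrix [[Q, 0],[0, Q]], and for every positive integer k, Mᵏ + M⁻ᵏ is the block diagonal matrix [[D_k(Q), 0],[0, D_k(Q)]], where D_k is the kth Dickson polynomial of the first kind with parameter 1 (the integer polynomial characterized by D_k(x + x⁻¹) = xᵏ + x⁻ᵏ). -/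
open Matrix Polynomial

theorem blockMatrix_powers_dickson {R : Type*} [CommRing R] {n : ℕ}
    (Q : Matrix (Fin n) (Fin n) R) :
    (Matrix.fromBlocks Q (-1) (1 : Matrix (Fin n) (Fin n) R) 0) *
        (Matrix.fromBlocks 0 (1 : Matrix (Fin n) (Fin n) R) (-1) Q) = 1 ∧
    (Matrix.fromBlocks 0 (1 : Matrix (Fin n) (Fin n) R) (-1) Q) *
        (Matrix.fromBlocks Q (-1) (1 : Matrix (Fin n) (Fin n) R) 0) = 1 ∧
    (Matrix.fromBlocks Q (-1) (1 : Matrix (Fin n) (Fin n) R) 0) +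
        (Matrix.fromBlocks 0 (1 : Matrix (Fin n) (Fin n) R) (-1) Q) =
      Matrix.fromBlocks Q 0 0 Q ∧
    ∀ k : ℕ, 0 < k →
      (Matrix.fromBlocks Q (-1) (1 : Matrix (Fin n) (Fin n) R) 0) ^ k +
          (Matrix.fromBlocks 0 (1 : Matrix (Fin n) (Fin n) R) (-1) Q) ^ k =
        Matrix.fromBlocks (Polynomial.aeval Q (Polynomial.dickson 1 (1 : R) k)) 0 0
          (Polynomial.aeval Q (Polynomial.dickson 1 (1 : R) k)) := by
  set M := Matrix.fromBlocks Q (-1) (1 : Matrix (Fin n) (Fin n) R) (0 : Matrix (Fin n) (Fin n) R) with hM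
  set N := Matrix.fromBlocks (0 : Matrix (Fin n) (Fin n) R) (1 : Matrix (Fin n) (Fin n) R) (-1) Q with hN
  have hMN : M * N = 1 := by
    rw [hM, hN, Matrix.fromBlocks_multiply, ← Matrix.fromBlocks_one]
    congr 1 <;> simp
  have hNM : N * M = 1 := by
    rw [hM, hN, Matrix.fromBlocks_multiply, ← Matrix.fromBlocks_one]
    congr 1 <;> simp
  have hadd : M + N = Matrix.fromBlocks Q 0 0 Q := by
    rw [hM, hN, Matrix.fromBlocks_add]
    congr 1 <;> simp
  refine ⟨hMN, hNM, hadd, ?_⟩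
  have key : ∀ k : ℕ, M ^ k + N ^ k =
      Matrix.fromBlocks (Polynomial.aeval Q (Polynomial.dickson 1 (1 : R) k)) 0 0
        (Polynomial.aeval Q (Polynomial.dickson 1 (1 : R) k)) ∧
      M ^ (k + 1) + N ^ (k + 1) =
      Matrix.fromBlocks (Polynomial.aeval Q (Polynomial.dickson 1 (1 : R) (k + 1))) 0 0
        (Polynomial.aeval Q (Polynomial.dickson 1 (1 : R) (k + 1))) := by
    intro k
    induction k with
    | zero =>
      constructor
      · have h2 : (Polynomial.aeval Q) (Polynomial.dickson 1 (1 : R) 0) =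
            (1 : Matrix (Fin n) (Fin n) R) + 1 := by
          rw [Polynomial.dickson_zero]
          simp [map_ofNat]
          norm_num
        rw [pow_zero, pow_zero, h2, ← Matrix.fromBlocks_one, Matrix.fromBlocks_add]
        simp
      · simpa [Polynomial.dickson_one] using hadd
    | succ k ih =>
      refine ⟨ih.2, ?_⟩
      have h1 : M ^ (k + 2) + N ^ (k + 2) =
          (M + N) * (M ^ (k + 1) + N ^ (k + 1)) - (M ^ k + N ^ k) := by
        have e1 : N * M ^ (k + 1) = M ^ k := by
          rw [pow_succ', ← mul_assoc, hNM, one_mul]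
        have e2 : M * N ^ (k + 1) = N ^ k := by
          rw [pow_succ', ← mul_assoc, hMN, one_mul]
        rw [add_mul, mul_add, mul_add, ← pow_succ', ← pow_succ', e1, e2]
        abel
      rw [h1, ih.1, ih.2, hadd, Polynomial.dickson_add_two, Matrix.fromBlocks_multiply,
        sub_eq_add_neg, Matrix.fromBlocks_neg, Matrix.fromBlocks_add]
      congr 1 <;> simp [sub_eq_add_neg]
  intro k _
  exact (key k).1
end

section
/- Let λ be a Perron number. Then no Galois conjugate of λ is purely imaginary; that is, no Galois conjugate of λ has the form i·b with b a nonzero real number. -/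
open Polynomial

/-!
Complex conjugation fixes `ℚ`, so together with a purely imaginary conjugate `i b` of `λ` also
`-i b = conj (i b)` is one. Conjugacy commutes with negation, so `-λ` is conjugate to `-i b`, hence
to `i b` and to `λ`: a conjugate of `λ` different from `λ` with modulus `λ`.
-/

theorem IsConjRoot.isConjRoot_neg_of_isConjRoot_neg {K S : Type*} [Field K] [CommRing S]
    [Algebra K S] {x z : S} (hxz : IsConjRoot K x z) (hz : IsConjRoot K z (-z)) :
    IsConjRoot K x (-x) :=
  (hxz.trans hz).trans hxz.neg.symm

theorem Complex.isConjRoot_conj (z : ℂ) : IsConjRoot ℚ z (starRingEnd ℂ z) :=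
  isConjRoot_of_algEquiv z (Complex.conjAe.restrictScalars ℚ)

theorem mem_galoisConjugates_iff_isConjRoot {x : ℝ} (hx : IsIntegral ℚ x) {z : ℂ} :
    z ∈ galoisConjugates x ↔ IsConjRoot ℚ (x : ℂ) z := by
  rw [← Complex.coe_algebraMap, isConjRoot_iff_aeval_eq_zero hx.algebraMap,
    minpoly.algebraMap_eq (algebraMap ℝ ℂ).injective]
  rfl

theorem perron_no_purely_imaginary_conjugate (l : ℝ) (hl : IsPerron l) :
    ∀ b : ℝ, b ≠ 0 → (Complex.I * (b : ℂ)) ∉ galoisConjugates l := by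
  rintro b - hmem
  obtain ⟨hl1, hint, hconj⟩ := hl
  have hintQ : IsIntegral ℚ l := hint.tower_top
  have hz : IsConjRoot ℚ (Complex.I * b) (-(Complex.I * b)) := by
    simpa using Complex.isConjRoot_conj (Complex.I * b)
  have hneg : -(l : ℂ) ∈ galoisConjugates l := (mem_galoisConjugates_iff_isConjRoot hintQ).2 <|
    ((mem_galoisConjugates_iff_isConjRoot hintQ).1 hmem).isConjRoot_neg_of_isConjRoot_neg hz
  have hlt := hconj _ hneg (by norm_cast; linarith)
  rw [norm_neg, Complex.norm_real, Real.norm_of_nonneg (by linarith)] at hlt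
  exact lt_irrefl l hlt
end

section
/- Let y be a Perron number with y > 2 all of whose Galois conjugates are real and strictly greater than −2, and let x > 1 be the real number satisfying x + x⁻¹ = y. Then x is a bi-Perron number and every Galois conjugate of x lies in S¹ ∪ ℝ_{>0}. -/
/-!
Every Galois conjugate `z` of `x` is nonzero and `z + z⁻¹` is a Galois conjugate of
`y = x + x⁻¹`, hence a real number `> -2`; so either `‖z‖ = 1` or `z` is a positive real `s`.
In the latter case the Perron property gives `s + s⁻¹ ≤ x + x⁻¹`, which forces
`x⁻¹ ≤ s ≤ x`. Since `x` is a root of `X² - yX + 1`, both `x` and `x⁻¹ = y - x` are algebraic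
integers, so `x` is a unit.
-/

open Polynomial

/-- A bi-Perron number: a real algebraic unit `l > 1` such that every Galois conjugate
`μ ∉ {l, l⁻¹, -l⁻¹}` satisfies `l⁻¹ < |μ| < l`, and at most one of `l⁻¹, -l⁻¹` is a
Galois conjugate of `l`. -/
def IsBiPerron (l : ℝ) : Prop :=
  1 < l ∧ IsIntegral ℤ l ∧
    ((minpoly ℚ l).coeff 0 = 1 ∨ (minpoly ℚ l).coeff 0 = -1) ∧
    (∀ z : ℂ, z ∈ galoisConjugates l → z ≠ (l : ℂ) → z ≠ ((l : ℂ))⁻¹ → z ≠ -((l : ℂ))⁻¹ →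
      (l⁻¹ < ‖z‖ ∧ ‖z‖ < l)) ∧
    ¬((((l : ℂ))⁻¹ ∈ galoisConjugates l) ∧ ((-((l : ℂ))⁻¹) ∈ galoisConjugates l))

lemma isIntegral_of_isIntegral_add_inv {R K : Type*} [CommRing R] [Field K] [Algebra R K]
    {x : K} (hx : x ≠ 0) (h : IsIntegral R (x + x⁻¹)) : IsIntegral R x := by
  have hmonic : (X * (X - C (x + x⁻¹))).Monic := monic_X.mul (monic_X_sub_C _)
  refine .of_aeval_monic_of_isIntegral_coeff hmonic ?_ ?_ ?_
  · rw [natDegree_mul X_ne_zero (X_sub_C_ne_zero _)]; simp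
  · have : eval x (X * (X - C (x + x⁻¹))) = -1 := by simp [hx]
    rw [this]; exact isIntegral_one.neg
  · rintro (_ | _ | n)
    · simpa using isIntegral_zero
    · simpa using h.neg
    · simp [coeff_X]
      split_ifs
      exacts [isIntegral_one, isIntegral_zero]

lemma isUnit_coeff_zero_minpoly {R K : Type*} [CommRing R] [IsDomain R] [IsIntegrallyClosed R]
    [Field K] [Algebra R K] [Module.IsTorsionFree R K] {x : K} (hx0 : x ≠ 0)
    (hx : IsIntegral R x) (hinv : IsIntegral R x⁻¹) : IsUnit ((minpoly R x).coeff 0) := by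
  let _ : Invertible x⁻¹ := invertibleOfNonzero (inv_ne_zero hx0)
  have hroot : aeval x (minpoly R x⁻¹).reverse = 0 := by
    simpa [aeval_def] using (eval₂_reverse_eq_zero_iff _ x⁻¹ _).mpr (minpoly.aeval R x⁻¹)
  obtain ⟨q, hq⟩ := minpoly.isIntegrallyClosed_dvd hx hroot
  refine .of_mul_eq_one (q.coeff 0) ?_
  rw [← mul_coeff_zero, ← hq, coeff_zero_reverse, (minpoly.monic hinv).leadingCoeff]

lemma coeff_zero_minpoly_rat_eq_one_or_neg_one {K : Type*} [Field K] [CharZero K] {x : K}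
    (hx0 : x ≠ 0) (hx : IsIntegral ℤ x) (hinv : IsIntegral ℤ x⁻¹) :
    (minpoly ℚ x).coeff 0 = 1 ∨ (minpoly ℚ x).coeff 0 = -1 := by
  rw [minpoly.isIntegrallyClosed_eq_field_fractions' ℚ hx, coeff_map]
  rcases Int.isUnit_iff.mp (isUnit_coeff_zero_minpoly hx0 hx hinv) with h | h <;> simp [h]

section Conjugates

variable {F L E : Type*} [Field F] [Field L] [Field E] [Algebra F L] [Algebra F E]
  {x : L} {z : E}

lemma ne_zero_of_aeval_minpoly_eq_zero (hx : IsIntegral F x) (hx0 : x ≠ 0)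
    (hz : aeval z (minpoly F x) = 0) : z ≠ 0 := by
  rintro rfl
  apply minpoly.coeff_zero_ne_zero hx hx0
  simpa [← coeff_zero_eq_aeval_zero'] using hz

open IntermediateField in
lemma aeval_add_inv_minpoly_eq_zero (hx : IsIntegral F x) (hz : aeval z (minpoly F x) = 0) :
    aeval (z + z⁻¹) (minpoly F (x + x⁻¹)) = 0 := by
  let σ : F⟮x⟯ →ₐ[F] E := (algHomAdjoinIntegralEquiv F hx).symm
    ⟨z, mem_aroots.mpr ⟨minpoly.ne_zero hx, hz⟩⟩
  set g := AdjoinSimple.gen F x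
  have hσ : σ g = z := algHomAdjoinIntegralEquiv_symm_apply_gen F hx _
  have hg : algebraMap F⟮x⟯ L (g + g⁻¹) = x + x⁻¹ := by simp [g]
  rw [← hg, minpoly.algebraMap_eq (algebraMap F⟮x⟯ L).injective, ← hσ, ← map_inv₀, ← map_add,
    aeval_algHom_apply, minpoly.aeval, map_zero]

end Conjugates

lemma IsPerron.norm_le {l : ℝ} (hl : IsPerron l) {z : ℂ} (hz : z ∈ galoisConjugates l) :
    ‖z‖ ≤ l := by
  obtain rfl | hne := eq_or_ne z l
  · simp [abs_of_pos (one_pos.trans hl.1)]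
  · exact (hl.2.2 z hz hne).le

lemma add_inv_le_neg_two {s : ℝ} (hs : s < 0) : s + s⁻¹ ≤ -2 := by
  have : s * s⁻¹ = 1 := mul_inv_cancel₀ hs.ne
  nlinarith [sq_nonneg (s + 1), inv_lt_zero.mpr hs]

lemma inv_le_and_le_of_add_inv_le {s x : ℝ} (hs : 0 < s) (hx : 1 ≤ x)
    (h : s + s⁻¹ ≤ x + x⁻¹) : x⁻¹ ≤ s ∧ s ≤ x := by
  have hx0 : 0 < x := one_pos.trans_le hx
  have hprod : (s - x) * (s * x - 1) ≤ 0 := by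
    have key : (s - x) * (s * x - 1) = s * x * (s + s⁻¹ - (x + x⁻¹)) := by
      field_simp; ring
    rw [key]
    exact mul_nonpos_of_nonneg_of_nonpos (by positivity) (by linarith)
  rw [inv_le_iff_one_le_mul₀ hx0]
  constructor <;> by_contra! hlt
  · have hsx : s < x := by nlinarith
    nlinarith [mul_pos (sub_pos.2 hsx) (sub_pos.2 hlt)]
  · nlinarith [mul_pos (sub_pos.2 hlt) (show 0 < s * x - 1 by nlinarith)]

lemma norm_eq_one_or_exists_pos_of_add_inv_eq {z : ℂ} {w : ℝ} (hz : z ≠ 0)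
    (h : z + z⁻¹ = w) (hw : -2 < w) : ‖z‖ = 1 ∨ ∃ s : ℝ, 0 < s ∧ z = s := by
  by_cases him : z.im = 0
  · right
    have hzs : z = (z.re : ℂ) := Complex.ext rfl (by simpa using him)
    refine ⟨z.re, ?_, hzs⟩
    have hre : z.re + z.re⁻¹ = w := by exact_mod_cast hzs ▸ h
    have hre0 : z.re ≠ 0 := fun h0 ↦ hz (by rw [hzs, h0, Complex.ofReal_zero])
    by_contra! hneg
    linarith [add_inv_le_neg_two (lt_of_le_of_ne hneg hre0)]
  · left
    have him_eq : z.im - z.im / Complex.normSq z = 0 := by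
      simpa [Complex.inv_im, sub_eq_add_neg, neg_div] using congrArg Complex.im h
    have hnormSq : Complex.normSq z = 1 := by
      rw [sub_eq_zero, eq_div_iff (Complex.normSq_eq_zero.not.mpr hz)] at him_eq
      exact (mul_eq_left₀ him).mp him_eq
    rw [← pow_eq_one_iff_of_nonneg (norm_nonneg z) two_ne_zero, ← Complex.normSq_eq_norm_sq,
      hnormSq]

section AddInv

variable {x : ℝ}

lemma norm_eq_one_or_exists_pos_of_mem_galoisConjugates (hx0 : x ≠ 0) (hxQ : IsIntegral ℚ x)
    (hconj : ∀ w ∈ galoisConjugates (x + x⁻¹), ∃ r : ℝ, w = (r : ℂ) ∧ -2 < r)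
    {z : ℂ} (hz : z ∈ galoisConjugates x) : ‖z‖ = 1 ∨ ∃ s : ℝ, 0 < s ∧ z = s := by
  obtain ⟨r, hr, hr2⟩ := hconj _ (aeval_add_inv_minpoly_eq_zero hxQ hz)
  exact norm_eq_one_or_exists_pos_of_add_inv_eq
    (ne_zero_of_aeval_minpoly_eq_zero hxQ hx0 hz) hr hr2

lemma inv_le_and_le_of_ofReal_mem_galoisConjugates (hx : 1 ≤ x) (hxQ : IsIntegral ℚ x)
    (hperron : IsPerron (x + x⁻¹)) {s : ℝ} (hs : 0 < s) (hsc : (s : ℂ) ∈ galoisConjugates x) :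
    x⁻¹ ≤ s ∧ s ≤ x := by
  refine inv_le_and_le_of_add_inv_le hs hx ?_
  have := hperron.norm_le (aeval_add_inv_minpoly_eq_zero hxQ hsc)
  rwa [← Complex.ofReal_inv, ← Complex.ofReal_add, Complex.norm_real, Real.norm_eq_abs,
    abs_of_pos (by positivity)] at this

end AddInv

theorem biPerron_from_totally_real_perron_general (y : ℝ) (hy : IsPerron y)
    (hconj : ∀ z ∈ galoisConjugates y, ∃ r : ℝ, z = (r : ℂ) ∧ -2 < r)
    (x : ℝ) (hx : 1 < x) (hxy : x + x⁻¹ = y) :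
    IsBiPerron x ∧
    ∀ z ∈ galoisConjugates x, ‖z‖ = 1 ∨ ∃ r : ℝ, 0 < r ∧ z = (r : ℂ) := by
  subst hxy
  have hx0 : x ≠ 0 := by positivity
  have hxZ : IsIntegral ℤ x := isIntegral_of_isIntegral_add_inv hx0 hy.2.1
  have hxinvZ : IsIntegral ℤ x⁻¹ := by simpa using hy.2.1.sub hxZ
  have hxQ : IsIntegral ℚ x := hxZ.tower_top
  have hdich := fun z (hz : z ∈ galoisConjugates x) ↦
    norm_eq_one_or_exists_pos_of_mem_galoisConjugates hx0 hxQ hconj hz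
  refine ⟨⟨hx, hxZ, coeff_zero_minpoly_rat_eq_one_or_neg_one hx0 hxZ hxinvZ,
    fun z hz hzx hzinv _ ↦ ?_, fun ⟨_, hneg⟩ ↦ ?_⟩, hdich⟩
  · rcases hdich z hz with hnorm | ⟨s, hs, rfl⟩
    · exact hnorm ▸ ⟨inv_lt_one_of_one_lt₀ hx, hx⟩
    · obtain ⟨hle, hge⟩ := inv_le_and_le_of_ofReal_mem_galoisConjugates hx.le hxQ hy hs hz
      rw [Complex.norm_real, Real.norm_eq_abs, abs_of_pos hs]
      exact ⟨hle.lt_of_ne (by rintro rfl; simp at hzinv),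
        hge.lt_of_ne (by rintro rfl; exact hzx rfl)⟩
  · rcases hdich _ hneg with hnorm | ⟨s, hs, hs_eq⟩
    · rw [norm_neg, norm_inv, Complex.norm_real, Real.norm_eq_abs, abs_of_pos (by positivity),
        inv_eq_one] at hnorm
      exact hx.ne' hnorm
    · have : -x⁻¹ = s := by exact_mod_cast hs_eq
      linarith [inv_pos.mpr (one_pos.trans hx)]

theorem biPerron_from_totally_real_perron (y : ℝ) (hy : IsPerron y) (hy2 : 2 < y)
    (hconj : ∀ z ∈ galoisConjugates y, ∃ r : ℝ, z = (r : ℂ) ∧ -2 < r)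
    (x : ℝ) (hx : 1 < x) (hxy : x + x⁻¹ = y) :
    IsBiPerron x ∧
    ∀ z ∈ galoisConjugates x, ‖z‖ = 1 ∨ ∃ r : ℝ, 0 < r ∧ z = (r : ℂ) :=
  biPerron_from_totally_real_perron_general y hy hconj x hx hxy
end
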